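/- Suppose the weights of H²_ω satisfy ω_{k+n+1} < ω_{k+1}/4 for some k, n ∈ ℕ. Then M := inf{ |z| : z is a zero of some optimal polynomial approximant q_{m,f} for some nonzero f ∈ H²_ω with f(0) ≠ 0 and some m } is strictly less than 1. -/

import Mathlib

/-!
The first optimal approximant `a + b z` of `1/f` comes from the orthogonal projection of `1` onto
`span {f, z f}`. Since `⟨1, z f⟩ = 0`, orthogonality of the residual to `z f` forces
`a ⟨z f, f⟩ + b ‖z f‖² = 0`, so the zero of the approximant is `‖z f‖² / ⟨f, z f⟩`.
For `f = z^k T_n((1 + z)/(1 - z)) = z^k (1 + 2 z + ⋯ + 2 zⁿ)` a termwise computation gives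
`⟨f, z f⟩ - ‖z f‖² = ω_{k+1} - 4 ω_{k+n+1} > 0`, so that zero lies in the unit disk. The strict
inequality is open, so adding a small constant to `f` keeps it while making `f(0) ≠ 0`.
-/

open scoped BigOperators
open Polynomial Filter

noncomputable section

/-- Coefficient sequence of the product p·f, where f is an analytic function on the disk
given by its Taylor coefficient sequence. -/
def polyMulSeq (p : Polynomial ℂ) (f : ℕ → ℂ) : ℕ → ℂ :=
  fun n => ∑ j ∈ Finset.range (n + 1), p.coeff j * f (n - j)

/-- The constant function 1 as a Taylor coefficient sequence. -/
def oneSeq : ℕ → ℂ := fun n => if n = 0 then 1 else 0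

/-- Membership in the weighted Hardy space H²_ω. -/
def MemHw (ω : ℕ → ℝ) (f : ℕ → ℂ) : Prop :=
  Summable (fun k => ‖f k‖ ^ 2 * ω k)

/-- Squared weighted norm ‖f‖²_ω. -/
def wNormSq (ω : ℕ → ℝ) (f : ℕ → ℂ) : ℝ := ∑' k, ‖f k‖ ^ 2 * ω k

/-- Weighted inner product ⟨f,g⟩_ω. -/
def wInner (ω : ℕ → ℝ) (f g : ℕ → ℂ) : ℂ :=
  ∑' k, f k * (starRingEnd ℂ) (g k) * (ω k : ℂ)

/-- `q` is the n-th optimal polynomial approximant of 1/f in H²_ω. -/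
def IsOPA (ω : ℕ → ℝ) (f : ℕ → ℂ) (n : ℕ) (q : Polynomial ℂ) : Prop :=
  q.natDegree ≤ n ∧
  ∀ p : Polynomial ℂ, p.natDegree ≤ n →
    wNormSq ω (polyMulSeq q f - oneSeq) ≤ wNormSq ω (polyMulSeq p f - oneSeq)


section WeightedSequences

variable {ω : ℕ → ℝ} {N : ℕ}

lemma memHw_of_eq_zero_of_le {u : ℕ → ℂ} (hu : ∀ i, N ≤ i → u i = 0) : MemHw ω u :=
  summable_of_ne_finset_zero (s := Finset.range N) fun i hi => by
    simp [hu i (by simpa using hi)]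

lemma wNormSq_nonneg (hω : ∀ i, 0 ≤ ω i) (u : ℕ → ℂ) : 0 ≤ wNormSq ω u :=
  tsum_nonneg fun i => mul_nonneg (sq_nonneg _) (hω i)

lemma wNormSq_eq_sum {u : ℕ → ℂ} (hu : ∀ i, N ≤ i → u i = 0) :
    wNormSq ω u = ∑ i ∈ Finset.range N, ‖u i‖ ^ 2 * ω i :=
  tsum_eq_sum fun i hi => by simp [hu i (by simpa using hi)]

lemma wInner_eq_sum {u : ℕ → ℂ} (v : ℕ → ℂ) (hu : ∀ i, N ≤ i → u i = 0) :
    wInner ω u v = ∑ i ∈ Finset.range N, u i * starRingEnd ℂ (v i) * ω i :=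
  tsum_eq_sum fun i hi => by simp [hu i (by simpa using hi)]

end WeightedSequences

section PolyMulSeq

lemma polyMulSeq_add (p q : ℂ[X]) (f : ℕ → ℂ) :
    polyMulSeq (p + q) f = polyMulSeq p f + polyMulSeq q f := by
  ext n
  simp [polyMulSeq, add_mul, Finset.sum_add_distrib]

lemma polyMulSeq_C_mul (a : ℂ) (p : ℂ[X]) (f : ℕ → ℂ) :
    polyMulSeq (C a * p) f = a • polyMulSeq p f := by
  ext n
  simp [polyMulSeq, Finset.mul_sum, mul_assoc]

lemma polyMulSeq_one (f : ℕ → ℂ) : polyMulSeq 1 f = f := by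
  ext n
  simp [polyMulSeq, Polynomial.coeff_one]

lemma polyMulSeq_X_zero (f : ℕ → ℂ) : polyMulSeq X f 0 = 0 := by
  simp [polyMulSeq]

lemma polyMulSeq_X_succ (f : ℕ → ℂ) (n : ℕ) : polyMulSeq X f (n + 1) = f n := by
  simp [polyMulSeq, Polynomial.coeff_X]

lemma polyMulSeq_of_natDegree_le_one {p : ℂ[X]} (hp : p.natDegree ≤ 1) (f : ℕ → ℂ) :
    polyMulSeq p f = p.coeff 0 • f + p.coeff 1 • polyMulSeq X f := by
  conv_lhs => rw [eq_X_add_C_of_natDegree_le_one hp, ← mul_one (C (p.coeff 0))]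
  rw [polyMulSeq_add, polyMulSeq_C_mul, polyMulSeq_C_mul, polyMulSeq_one, add_comm]

lemma polyMulSeq_eq_zero_of_le {N m : ℕ} {p : ℂ[X]} {f : ℕ → ℂ} (hp : p.natDegree ≤ m)
    (hf : ∀ i, N ≤ i → f i = 0) (i : ℕ) (hi : N + m ≤ i) : polyMulSeq p f i = 0 := by
  refine Finset.sum_eq_zero fun j _ => ?_
  by_cases hj : j ≤ m
  · rw [hf _ (by omega), mul_zero]
  · rw [coeff_eq_zero_of_natDegree_lt (by omega), zero_mul]

lemma continuous_polyMulSeq (p : ℂ[X]) : Continuous (polyMulSeq p) :=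
  continuous_pi fun _ => continuous_finsetSum _ fun _ _ =>
    continuous_const.mul (continuous_apply _)

end PolyMulSeq

theorem exists_smul_add_smul_minimizer {E : Type*} [NormedAddCommGroup E] [InnerProductSpace ℂ E]
    [FiniteDimensional ℂ E] {u v e : E} (hve : inner ℂ v e = 0) (hvu : inner ℂ v u ≠ 0) :
    ∃ a b : ℂ, (∀ x y : ℂ, ‖a • u + b • v - e‖ ≤ ‖x • u + y • v - e‖) ∧
      a + b * ((‖v‖ : ℂ) ^ 2 / inner ℂ v u) = 0 := by
  set K := Submodule.span ℂ {u, v}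
  obtain ⟨a, b, hab⟩ := Submodule.mem_span_pair.mp (K.starProjection_apply_mem e)
  have horth : inner ℂ v (e - (a • u + b • v)) = 0 := by
    rw [hab, inner_eq_zero_symm]
    exact K.starProjection_inner_eq_zero e v (Submodule.subset_span (by simp))
  refine ⟨a, b, fun x y => ?_, ?_⟩
  · have hmem : x • u + y • v ∈ K := K.add_mem (K.smul_mem x (Submodule.subset_span (by simp)))
      (K.smul_mem y (Submodule.subset_span (by simp)))
    rw [hab, norm_sub_rev, K.starProjection_minimal, norm_sub_rev]
    exact ciInf_le (f := fun w : K => ‖e - w‖) ⟨0, by rintro _ ⟨w, rfl⟩; positivity⟩ ⟨_, hmem⟩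
  · rw [inner_sub_right, inner_add_right, inner_smul_right, inner_smul_right, hve,
      inner_self_eq_norm_sq_to_K] at horth
    field_simp
    linear_combination -horth

/-- Scaling by `√ω` and truncating to the first `N` coefficients: on sequences supported in
`[0, N)` this is an isometry onto `ℂ^N`, so `IsOPA` becomes an orthogonal projection problem. -/
def weightedEuclid (ω : ℕ → ℝ) (N : ℕ) : (ℕ → ℂ) →ₗ[ℂ] EuclideanSpace ℂ (Fin N) where
  toFun u := WithLp.toLp 2 fun i => (√(ω i) : ℂ) * u i
  map_add' u v := by ext i; simp [mul_add]
  map_smul' a u := by ext i; simp [mul_left_comm]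

section WeightedEuclid

variable {ω : ℕ → ℝ} {N : ℕ}

lemma norm_weightedEuclid_sq (hω : ∀ i, 0 ≤ ω i) {u : ℕ → ℂ} (hu : ∀ i, N ≤ i → u i = 0) :
    ‖weightedEuclid ω N u‖ ^ 2 = wNormSq ω u := by
  rw [EuclideanSpace.norm_sq_eq, wNormSq_eq_sum hu, ← Fin.sum_univ_eq_sum_range]
  refine Finset.sum_congr rfl fun i _ => ?_
  simp [weightedEuclid, mul_pow, Real.sq_sqrt (hω i), mul_comm]

lemma inner_weightedEuclid (hω : ∀ i, 0 ≤ ω i) (u : ℕ → ℂ) {v : ℕ → ℂ}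
    (hv : ∀ i, N ≤ i → v i = 0) :
    inner ℂ (weightedEuclid ω N u) (weightedEuclid ω N v) = wInner ω v u := by
  rw [PiLp.inner_apply, wInner_eq_sum u hv, ← Fin.sum_univ_eq_sum_range]
  refine Finset.sum_congr rfl fun i _ => ?_
  simp only [weightedEuclid, LinearMap.coe_mk, AddHom.coe_mk, RCLike.inner_apply, map_mul,
    Complex.conj_ofReal]
  rw [mul_mul_mul_comm, ← Complex.ofReal_mul, Real.mul_self_sqrt (hω i)]
  ring

end WeightedEuclid

theorem exists_isOPA_one_eval_eq_zero {ω : ℕ → ℝ} (hω : ∀ i, 0 ≤ ω i) {N : ℕ} {f : ℕ → ℂ}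
    (hf : ∀ i, N ≤ i → f i = 0) (hinner : wInner ω f (polyMulSeq X f) ≠ 0) :
    ∃ q : ℂ[X], IsOPA ω f 1 q ∧
      q.eval (wNormSq ω (polyMulSeq X f) / wInner ω f (polyMulSeq X f)) = 0 := by
  set T := weightedEuclid ω (N + 1)
  have hf' : ∀ i, N + 1 ≤ i → f i = 0 := fun i hi => hf i (by omega)
  have hXf := polyMulSeq_eq_zero_of_le natDegree_X_le hf
  have hone1 : ∀ i, 1 ≤ i → oneSeq i = 0 := fun i hi => if_neg (by omega)
  have hone : ∀ i, N + 1 ≤ i → oneSeq i = 0 := fun i hi => hone1 i (by omega)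
  have hnorm : ∀ p : ℂ[X], p.natDegree ≤ 1 → wNormSq ω (polyMulSeq p f - oneSeq) =
      ‖p.coeff 0 • T f + p.coeff 1 • T (polyMulSeq X f) - T oneSeq‖ ^ 2 := by
    intro p hp
    rw [← map_smul, ← map_smul, ← map_add, ← map_sub, norm_weightedEuclid_sq hω,
      polyMulSeq_of_natDegree_le_one hp]
    intro i hi
    simp [hf' i hi, hXf i hi, hone i hi]
  have hXf_one : inner ℂ (T (polyMulSeq X f)) (T oneSeq) = 0 := by
    rw [inner_weightedEuclid hω _ hone, wInner_eq_sum _ hone1]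
    simp [polyMulSeq_X_zero]
  rw [← inner_weightedEuclid hω _ hf'] at hinner
  obtain ⟨a, b, hmin, hzero⟩ := exists_smul_add_smul_minimizer hXf_one hinner
  rw [inner_weightedEuclid hω _ hf', ← Complex.ofReal_pow, norm_weightedEuclid_sq hω hXf] at hzero
  refine ⟨C b * X + C a, ⟨natDegree_linear_le, fun p hp => ?_⟩, ?_⟩
  · rw [hnorm _ natDegree_linear_le, hnorm p hp]
    simpa using pow_le_pow_left₀ (norm_nonneg _) (hmin _ _) 2
  · simp only [eval_add, eval_mul, eval_C, eval_X]
    linear_combination hzero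

open Topology in
theorem exists_apply_zero_ne_zero_of_norm_lt {ω : ℕ → ℝ} {N : ℕ} {f₀ : ℕ → ℂ}
    (hf₀ : ∀ i, N ≤ i → f₀ i = 0)
    (h : wNormSq ω (polyMulSeq X f₀) < ‖wInner ω f₀ (polyMulSeq X f₀)‖) :
    ∃ f : ℕ → ℂ, (∀ i, N + 1 ≤ i → f i = 0) ∧ f 0 ≠ 0 ∧
      wNormSq ω (polyMulSeq X f) < ‖wInner ω f (polyMulSeq X f)‖ := by
  by_cases h0 : f₀ 0 ≠ 0
  · exact ⟨f₀, fun i hi => hf₀ i (by omega), h0, h⟩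
  set g : ℂ → ℕ → ℂ := fun ε => f₀ + ε • oneSeq
  have hg : ∀ ε, ∀ i, N + 1 ≤ i → g ε i = 0 := fun ε i hi => by
    simp [g, hf₀ i (by omega), oneSeq, show i ≠ 0 by omega]
  have hgX : ∀ ε, ∀ i, N + 1 + 1 ≤ i → polyMulSeq X (g ε) i = 0 := fun ε =>
    polyMulSeq_eq_zero_of_le natDegree_X_le (hg ε)
  have hcont : Continuous fun ε => ‖wInner ω (g ε) (polyMulSeq X (g ε))‖ -
      wNormSq ω (polyMulSeq X (g ε)) := by
    simp_rw [wInner_eq_sum _ (hg _), wNormSq_eq_sum (hgX _)]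
    have hg_cont : Continuous g := by fun_prop
    have hgX_cont := (continuous_polyMulSeq X).comp hg_cont
    fun_prop
  have hpos : ∀ᶠ ε in 𝓝 0, 0 < ‖wInner ω (g ε) (polyMulSeq X (g ε))‖ -
      wNormSq ω (polyMulSeq X (g ε)) :=
    continuousAt_const.eventually_lt hcont.continuousAt (by simpa [g] using h)
  obtain ⟨ε, hε, hε0⟩ := ((hpos.filter_mono (nhdsWithin_le_nhds (s := {0}ᶜ))).and
    self_mem_nhdsWithin).exists
  refine ⟨g ε, hg ε, ?_, by linarith⟩
  simpa [g, not_not.mp h0, oneSeq] using hε0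

/-- Taylor coefficients of `z^k T_n((1 + z)/(1 - z)) = z^k (1 + 2 z + ⋯ + 2 zⁿ)`. -/
def cayleyTaylorSeq (k n : ℕ) : ℕ → ℂ :=
  fun i => if i = k then 1 else if k < i ∧ i ≤ k + n then 2 else 0

lemma cayleyTaylorSeq_eq_zero_of_le {k n i : ℕ} (hi : k + n + 1 ≤ i) :
    cayleyTaylorSeq k n i = 0 := by
  simp only [cayleyTaylorSeq]
  split_ifs <;> first | rfl | omega

lemma wInner_cayleyTaylorSeq {ω : ℕ → ℝ} {k n : ℕ} (hn : n ≠ 0) :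
    wInner ω (cayleyTaylorSeq k n) (polyMulSeq X (cayleyTaylorSeq k n)) =
      wNormSq ω (polyMulSeq X (cayleyTaylorSeq k n)) + (ω (k + 1) - 4 * ω (k + n + 1) : ℝ) := by
  set f := cayleyTaylorSeq k n
  have hf : ∀ i, k + n + 1 ≤ i → f i = 0 := fun i => cayleyTaylorSeq_eq_zero_of_le
  have hinner : wInner ω f (polyMulSeq X f) =
      ∑ i ∈ Finset.range (k + n + 1), f (i + 1) * starRingEnd ℂ (f i) * ω (i + 1) := by
    rw [wInner_eq_sum (N := k + n + 1 + 1) _ fun i hi => hf i (by omega), Finset.sum_range_succ']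
    simp [polyMulSeq_X_zero, polyMulSeq_X_succ]
  have hnormSq : wNormSq ω (polyMulSeq X f) =
      ∑ i ∈ Finset.range (k + n + 1), ‖f i‖ ^ 2 * ω (i + 1) := by
    rw [wNormSq_eq_sum (polyMulSeq_eq_zero_of_le natDegree_X_le hf), Finset.sum_range_succ']
    simp [polyMulSeq_X_zero, polyMulSeq_X_succ]
  have hterm : ∀ i, f (i + 1) * starRingEnd ℂ (f i) * ω (i + 1) =
      ((‖f i‖ ^ 2 * ω (i + 1) : ℝ) : ℂ) + ((if i = k then (ω (k + 1) : ℂ) else 0) -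
        if i = k + n then 4 * (ω (k + n + 1) : ℂ) else 0) := by
    intro i
    simp only [f, cayleyTaylorSeq]
    split_ifs <;> (try omega) <;> subst_vars <;> norm_num [map_ofNat]
    ring
  rw [hinner, hnormSq, Finset.sum_congr rfl fun i _ => hterm i, Finset.sum_add_distrib,
    Finset.sum_sub_distrib, Finset.sum_ite_eq', Finset.sum_ite_eq', if_pos (by simp),
    if_pos (by simp)]
  push_cast
  ring

theorem stmt_14_general (ω : ℕ → ℝ) (hωpos : ∀ k, 0 < ω k)
    (k n : ℕ) (hcond : ω (k + n + 1) < ω (k + 1) / 4) :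
    ∃ (f : ℕ → ℂ) (m : ℕ) (q : Polynomial ℂ) (z : ℂ),
      MemHw ω f ∧ f ≠ 0 ∧ f 0 ≠ 0 ∧ IsOPA ω f m q ∧ q.eval z = 0 ∧
      ‖z‖ < 1 := by
  have hω : ∀ i, 0 ≤ ω i := fun i => (hωpos i).le
  have hn : n ≠ 0 := by rintro rfl; linarith [hωpos (k + 1)]
  have hwitness : wNormSq ω (polyMulSeq X (cayleyTaylorSeq k n)) <
      ‖wInner ω (cayleyTaylorSeq k n) (polyMulSeq X (cayleyTaylorSeq k n))‖ := by
    rw [wInner_cayleyTaylorSeq hn, ← Complex.ofReal_add, Complex.norm_real,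
      Real.norm_of_nonneg (by linarith [wNormSq_nonneg hω (polyMulSeq X (cayleyTaylorSeq k n))])]
    linarith
  obtain ⟨f, hf, hf0, hlt⟩ := exists_apply_zero_ne_zero_of_norm_lt
    (fun i => cayleyTaylorSeq_eq_zero_of_le) hwitness
  have hK := wNormSq_nonneg hω (polyMulSeq X f)
  obtain ⟨q, hq, hz⟩ := exists_isOPA_one_eval_eq_zero hω hf (norm_pos_iff.mp (by linarith))
  refine ⟨f, 1, q, _, memHw_of_eq_zero_of_le hf, fun h => hf0 (congrFun h 0), hf0, hq, hz, ?_⟩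
  rw [norm_div, Complex.norm_real, Real.norm_of_nonneg hK, div_lt_one (by linarith)]
  exact hlt

/-- If ω_{k+n+1} < ω_{k+1}/4 for some k, n, then some opa has a zero of modulus < 1. -/
theorem stmt_14 (ω : ℕ → ℝ) (hω0 : ω 0 = 1) (hωpos : ∀ k, 0 < ω k)
    (hratio : Tendsto (fun k => ω k / ω (k + 1)) atTop (nhds 1))
    (k n : ℕ) (hcond : ω (k + n + 1) < ω (k + 1) / 4) :
    ∃ (f : ℕ → ℂ) (m : ℕ) (q : Polynomial ℂ) (z : ℂ),
      MemHw ω f ∧ f ≠ 0 ∧ f 0 ≠ 0 ∧ IsOPA ω f m q ∧ q.eval z = 0 ∧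
      ‖z‖ < 1 :=
  stmt_14_general ω hωpos k n hcond
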